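/- In a Segal space W, any 0-simplex in the same path component of map_W(x,y) as a homotopy equivalence is itself a homotopy equivalence. -/

import Mathlib

open CategoryTheory Simplicial Opposite

/-- Simplicial spaces: simplicial objects in simplicial sets. -/
abbrev SSp : Type 1 := CategoryTheory.SimplicialObject SSet.{0}

/-- A map of simplicial sets is a weak homotopy equivalence if its geometric
realization is a homotopy equivalence of topological spaces (equivalently, by
the Whitehead theorem, a weak homotopy equivalence, since realizations are CW
complexes). -/
def SSet.IsWeakEquiv {X Y : SSet.{0}} (f : X ⟶ Y) : Prop :=
  ∃ g : SSet.toTop.obj Y ⟶ SSet.toTop.obj X,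
    ContinuousMap.Homotopic (SSet.toTop.map f ≫ g).hom (TopCat.Hom.hom (𝟙 (SSet.toTop.obj X))) ∧
    ContinuousMap.Homotopic (g ≫ SSet.toTop.map f).hom (TopCat.Hom.hom (𝟙 (SSet.toTop.obj Y)))

section Reedy

variable (n m : ℕ) (k : Fin (m + 1))

/-- The simplicial set `S × B` for a set `S`. -/
def pasteSet (S : Type) (B : SSet.{0}) : SSet.{0} where
  obj q := S × B.obj q
  map f := TypeCat.ofHom (Prod.map id (B.map f))
  map_id q := by ext x; cases x; simp [Prod.map]; exact FunctorToTypes.map_id_apply B _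
  map_comp f g := by ext x; cases x; simp [Prod.map]; exact FunctorToTypes.map_comp_apply B _ _ _

/-- Functoriality of `pasteSet` in the set variable. -/
def pasteMap {S T : Type} (g : S → T) (B : SSet.{0}) : pasteSet S B ⟶ pasteSet T B where
  app _q := TypeCat.ofHom (Prod.map g id)
  naturality _ _ _ := rfl

/-- The external product `A □ B` of two simplicial sets, a simplicial space with
`(A □ B)_{p,q} = A_p × B_q`. -/
def extProd (A B : SSet.{0}) : SSp where
  obj p := pasteSet (A.obj p) B
  map f := pasteMap (A.map f) B
  map_id p := by
    apply NatTrans.ext; funext q; ext x; cases x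
    simp only [pasteMap, pasteSet, Prod.map, FunctorToTypes.map_id_apply, id_eq]
    exact Prod.ext (FunctorToTypes.map_id_apply A _) rfl
  map_comp f g := by
    apply NatTrans.ext; funext q; ext x; cases x
    simp only [pasteMap, pasteSet, Prod.map, FunctorToTypes.map_comp_apply, id_eq]
    exact Prod.ext (FunctorToTypes.map_comp_apply A _ _ _) rfl

/-- The sub-simplicial-space `(∂Δ[n] □ Δ[m]) ∪ (Δ[n] □ Λ[m,k])` of
`Δ[n] □ Δ[m]`: level `p` of the first (outer) variable. -/
def bhSet (p : SimplexCategoryᵒᵖ) : SSet.{0} where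
  obj q := {x : Δ[n].obj p × Δ[m].obj q //
    ¬Function.Surjective (SSet.stdSimplex.asOrderHom x.1) ∨
      Set.range (SSet.stdSimplex.asOrderHom x.2) ∪ {k} ≠ Set.univ}
  map f := TypeCat.ofHom fun x => ⟨(x.1.1, Δ[m].map f x.1.2), by
    refine x.2.imp id ?_
    intro hb h
    apply hb
    rw [Set.eq_univ_iff_forall] at h ⊢; intro j
    refine Or.imp ?_ id (h j)
    intro hj
    exact Set.range_comp_subset_range _ _ hj⟩
  map_id q := by
    ext x
    · rfl
    · exact FunctorToTypes.map_id_apply Δ[m] _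
  map_comp f g := by
    ext x
    · rfl
    · exact FunctorToTypes.map_comp_apply Δ[m] _ _ _

/-- The sub-simplicial-space `(∂Δ[n] □ Δ[m]) ∪ (Δ[n] □ Λ[m,k])` of
`Δ[n] □ Δ[m]`. -/
def bhObj : SSp where
  obj p := bhSet n m k p
  map {p p'} f :=
    { app := fun q => TypeCat.ofHom fun x => ⟨(Δ[n].map f x.1.1, x.1.2), by
        refine x.2.imp ?_ id
        intro hb h
        exact hb (Function.Surjective.of_comp h)⟩
      naturality := fun _ _ g => by ext x <;> rfl }
  map_id p := by
    apply NatTrans.ext; funext q; ext x; apply Subtype.ext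
    exact Prod.ext (FunctorToTypes.map_id_apply Δ[n] _) rfl
  map_comp f g := by
    apply NatTrans.ext; funext q; ext x; apply Subtype.ext
    exact Prod.ext (FunctorToTypes.map_comp_apply Δ[n] _ _ _) rfl

/-- The inclusion `(∂Δ[n] □ Δ[m]) ∪ (Δ[n] □ Λ[m,k]) ⟶ Δ[n] □ Δ[m]`. -/
def bhIncl : bhObj n m k ⟶ extProd Δ[n] Δ[m] where
  app p :=
    { app := fun q => TypeCat.ofHom fun x => x.1
      naturality := fun _ _ g => rfl }
  naturality p p' f := by apply NatTrans.ext; funext q; ext x <;> rfl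

end Reedy

/-- A simplicial space is Reedy fibrant if it has the right lifting property
against the pushout-products of the boundary inclusions `∂Δ[n] ⟶ Δ[n]` (in the
outer direction) with the horn inclusions `Λ[m,k] ⟶ Δ[m]` (in the inner
direction); equivalently, all matching maps are Kan fibrations. -/
def ReedyFibrant (W : SSp) : Prop :=
  ∀ (n m : ℕ) (k : Fin (m + 2)),
    HasLiftingProperty (bhIncl n (m + 1) k) (CategoryTheory.Limits.terminal.from W)

/-- The `k`-fold fiber product `W_1 ×_{W_0} ⋯ ×_{W_0} W_1` (as a simplicial
set), target of the Segal map. -/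
def fiberProd (W : SSp) (k : ℕ) : SSet.{0} where
  obj q := {p : (Fin (k + 1) → (W.obj (op ⦋0⦌)).obj q) × (Fin k → (W.obj (op ⦋1⦌)).obj q) //
    (∀ i : Fin k, (W.δ 1).app q (p.2 i) = p.1 i.castSucc) ∧
      ∀ i : Fin k, (W.δ 0).app q (p.2 i) = p.1 i.succ}
  map {q q'} f := TypeCat.ofHom fun p => ⟨(fun i => (W.obj (op ⦋0⦌)).map f (p.1.1 i),
      fun i => (W.obj (op ⦋1⦌)).map f (p.1.2 i)), by
    constructor <;> intro i
    · have h := ConcreteCategory.congr_hom ((W.δ 1).naturality f) (p.1.2 i)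
      dsimp at h ⊢
      rw [← p.2.1 i]
      exact h
    · have h := ConcreteCategory.congr_hom ((W.δ 0).naturality f) (p.1.2 i)
      dsimp at h ⊢
      rw [← p.2.2 i]
      exact h⟩
  map_id q := by
    apply ConcreteCategory.hom_ext; intro p; apply Subtype.ext; dsimp
    rw [Prod.ext_iff]
    constructor <;> funext i <;> dsimp only <;> rw [FunctorToTypes.map_id_apply]
  map_comp f g := by
    apply ConcreteCategory.hom_ext; intro p; apply Subtype.ext; dsimp
    rw [Prod.ext_iff]
    constructor <;> funext i <;> dsimp only <;> rw [FunctorToTypes.map_comp_apply]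

/-- The Segal map `φ_k : W_k ⟶ W_1 ×_{W_0} ⋯ ×_{W_0} W_1`, induced by the
inclusions `α^i : [1] ⟶ [k]`, `0 ↦ i`, `1 ↦ i + 1`. -/
def segalMap (W : SSp) (k : ℕ) : W.obj (op ⦋k⦌) ⟶ fiberProd W k where
  app q := TypeCat.ofHom fun σ => ⟨(fun i => (W.map (SimplexCategory.const ⦋0⦌ ⦋k⦌ i).op).app q σ,
      fun i => (W.map (SimplexCategory.mkOfSucc i).op).app q σ), by
    constructor <;> intro i
    · have e1 : SimplexCategory.δ 1 ≫ SimplexCategory.mkOfSucc i =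
          SimplexCategory.const ⦋0⦌ ⦋k⦌ i.castSucc := by
        ext x; fin_cases x; aesop
      have h : W.map (SimplexCategory.mkOfSucc i).op ≫ W.δ 1 =
          W.map (SimplexCategory.const ⦋0⦌ ⦋k⦌ i.castSucc).op := by
        dsimp [CategoryTheory.SimplicialObject.δ]
        rw [← W.map_comp, ← op_comp, e1]
      exact ConcreteCategory.congr_hom (NatTrans.congr_app h q) σ
    · have e0 : SimplexCategory.δ 0 ≫ SimplexCategory.mkOfSucc i =
          SimplexCategory.const ⦋0⦌ ⦋k⦌ i.succ := by
        ext x; fin_cases x; rfl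
      have h : W.map (SimplexCategory.mkOfSucc i).op ≫ W.δ 0 =
          W.map (SimplexCategory.const ⦋0⦌ ⦋k⦌ i.succ).op := by
        dsimp [CategoryTheory.SimplicialObject.δ]
        rw [← W.map_comp, ← op_comp, e0]
      exact ConcreteCategory.congr_hom (NatTrans.congr_app h q) σ⟩
  naturality q q' f := by
    apply ConcreteCategory.hom_ext; intro σ; apply Subtype.ext; dsimp [fiberProd]
    rw [Prod.ext_iff]
    constructor <;> funext i <;>
      exact ConcreteCategory.congr_hom ((W.map _).naturality f) σ

/-- A Segal space: a Reedy fibrant simplicial space whose Segal maps are weak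
homotopy equivalences. -/
structure SegalSpace where
  W : SSp
  reedy : ReedyFibrant W
  segal : ∀ k : ℕ, 2 ≤ k → SSet.IsWeakEquiv (segalMap W k)

namespace SegalSpace

variable (S : SegalSpace)

/-- The space of objects. -/
def Ob : Type := (S.W.obj (op ⦋0⦌)) _⦋0⦌

/-- The source (initial vertex) of a point of `W_1`. -/
def src (f : (S.W.obj (op ⦋1⦌)) _⦋0⦌) : S.Ob := (S.W.δ 1).app (op ⦋0⦌) f

/-- The target (final vertex) of a point of `W_1`. -/
def tgt (f : (S.W.obj (op ⦋1⦌)) _⦋0⦌) : S.Ob := (S.W.δ 0).app (op ⦋0⦌) f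

/-- The identity `id_x = s₀(x)`. -/
def ident (x : S.Ob) : (S.W.obj (op ⦋1⦌)) _⦋0⦌ := (S.W.σ 0).app (op ⦋0⦌) x

/-- Two points of `W_1` with boundary `(x, y)` are homotopic if they lie in the
same path component of the mapping space `map_W(x,y)`, the fiber of
`(d₁, d₀) : W_1 → W_0 × W_0` over `(x, y)`: here an elementary homotopy is an
edge of `W_1` lying entirely in that fiber. -/
def Htpy (x y : S.Ob) (f g : (S.W.obj (op ⦋1⦌)) _⦋0⦌) : Prop :=
  Relation.EqvGen (fun f g =>
    ∃ e : (S.W.obj (op ⦋1⦌)) _⦋1⦌,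
      (S.W.obj (op ⦋1⦌)).δ 1 e = f ∧ (S.W.obj (op ⦋1⦌)).δ 0 e = g ∧
      (S.W.δ 1).app (op ⦋1⦌) e = (S.W.obj (op ⦋0⦌)).σ 0 x ∧
      (S.W.δ 0).app (op ⦋1⦌) e = (S.W.obj (op ⦋0⦌)).σ 0 y) f g

/-- `h` is a composite of `f` and `g` (in this order: `h = g ∘ f`) if there is a
`2`-simplex (point of `W_2`) with outer faces `f` and `g` and diagonal `h`. -/
def IsComp (f g h : (S.W.obj (op ⦋1⦌)) _⦋0⦌) : Prop :=
  ∃ σ : (S.W.obj (op ⦋2⦌)) _⦋0⦌,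
    (S.W.δ 2).app (op ⦋0⦌) σ = f ∧ (S.W.δ 0).app (op ⦋0⦌) σ = g ∧
      (S.W.δ 1).app (op ⦋0⦌) σ = h

/-- `g ∈ map_W(x,y)₀` is a homotopy equivalence if there are `f, h ∈ map_W(y,x)₀`
with `g ∘ f ∼ id_y` and `h ∘ g ∼ id_x`. -/
def HoEquiv (x y : S.Ob) (g : (S.W.obj (op ⦋1⦌)) _⦋0⦌) : Prop :=
  (∃ f : (S.W.obj (op ⦋1⦌)) _⦋0⦌, S.src f = y ∧ S.tgt f = x ∧
    ∃ c, S.IsComp f g c ∧ S.Htpy y y c (S.ident y)) ∧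
  ∃ h : (S.W.obj (op ⦋1⦌)) _⦋0⦌, S.src h = y ∧ S.tgt h = x ∧
    ∃ c, S.IsComp g h c ∧ S.Htpy x x c (S.ident x)

end SegalSpace

/-!
Let `e` be a `1`-simplex of `map_W(x,y)` from `g` to `g'` and let `σ ∈ W_2` witness a composite
having `g` as one of its faces. Placing `e` on that face and degenerate homotopies on the other
two, together with `σ` at the end of `Δ[1]` where `g` sits, gives a map
`(∂Δ[2] □ Δ[1]) ∪ (Δ[2] □ Λ[1,k]) ⟶ W`. Reedy fibrancy extends it over the prism
`Δ[2] □ Δ[1]`, and the other end of the prism witnesses the same composite with `g'` in place of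
`g`. Hence the witnesses of `HoEquiv` can be moved along `e`, in either direction.
-/

open SimplexCategory CategoryTheory.Limits

/-- A map `(∂Δ[2] □ Δ[1]) ∪ (Δ[2] □ Λ[1,k]) ⟶ W`: `side j` is its restriction to
`(face j) □ Δ[1]`, `edge i` to `{i} □ Δ[1]` and `base` to `Δ[2] □ {k}`. -/
structure PrismHorn (W : SSp) (k : Fin 2) where
  base : (W.obj (op ⦋2⦌)) _⦋0⦌
  side : Fin 3 → (W.obj (op ⦋1⦌)) _⦋1⦌
  edge : Fin 3 → (W.obj (op ⦋0⦌)) _⦋1⦌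
  side_vertex : ∀ (j : Fin 3) (w : Fin 2),
    (W.map (const ⦋0⦌ ⦋1⦌ w).op).app (op ⦋1⦌) (side j) = edge ((δ j).toOrderHom w)
  side_at : ∀ j : Fin 3,
    (W.obj (op ⦋1⦌)).map (const ⦋0⦌ ⦋1⦌ k).op (side j) = (W.δ j).app (op ⦋0⦌) base

namespace PrismHorn

variable {W : SSp} {k : Fin 2} (P : PrismHorn W k)

/-- On the domain of `toHom`, the second branch is taken only when `β` is constant at `k`. -/
noncomputable def val (p q : SimplexCategoryᵒᵖ) (α : p.unop ⟶ ⦋2⦌) (β : q.unop ⟶ ⦋1⦌) :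
    (W.obj p).obj q :=
  if H : ∃ j : Fin 3, ∀ i, α.toOrderHom i ≠ j then
    (W.map (factor_δ (m := p.unop.len) (n := 1) α H.choose).op).app q
      ((W.obj (op ⦋1⦌)).map β.op (P.side H.choose))
  else
    (W.obj p).map (const q.unop ⦋0⦌ 0).op ((W.map α.op).app (op ⦋0⦌) P.base)

lemma map_factor_δ_side_of_const {p q : SimplexCategoryᵒᵖ} (α : p.unop ⟶ ⦋2⦌)
    (β : q.unop ⟶ ⦋1⦌) {j v : Fin 3} (hj : ∀ i, α.toOrderHom i ≠ j)
    (hα : ∀ i, α.toOrderHom i = v) :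
    (W.map (factor_δ (m := p.unop.len) (n := 1) α j).op).app q
        ((W.obj (op ⦋1⦌)).map β.op (P.side j)) =
      (W.map (const p.unop ⦋0⦌ 0).op).app q ((W.obj (op ⦋0⦌)).map β.op (P.edge v)) := by
  set w : Fin 2 := (σ (Fin.predAbove 0 j)).toOrderHom v
  have hfac : factor_δ (m := p.unop.len) (n := 1) α j = const p.unop ⦋1⦌ w := by
    ext i : 3
    exact congrArg (σ (Fin.predAbove 0 j)).toOrderHom (hα i)
  have hw : (δ j).toOrderHom w = v := by
    simpa [hfac, hα] using congr_toOrderHom_apply (factor_δ_spec α j hj) 0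
  rw [hfac, const_fac_thru_zero, op_comp, W.map_comp, NatTrans.comp_app, types_comp_apply,
    NatTrans.naturality_apply, P.side_vertex, hw]

lemma val_eq {p q : SimplexCategoryᵒᵖ} (α : p.unop ⟶ ⦋2⦌) (β : q.unop ⟶ ⦋1⦌) (j : Fin 3)
    (hj : ∀ i, α.toOrderHom i ≠ j) :
    P.val p q α β = (W.map (factor_δ (m := p.unop.len) (n := 1) α j).op).app q
      ((W.obj (op ⦋1⦌)).map β.op (P.side j)) := by
  have H : ∃ j : Fin 3, ∀ i, α.toOrderHom i ≠ j := ⟨j, hj⟩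
  rw [val, dif_pos H]
  by_cases hjj : H.choose = j
  · rw [hjj]
  -- `α` misses two vertices of `Δ[2]`, so it is constant
  have hconst : ∀ i, α.toOrderHom i = α.toOrderHom 0 := by
    have key : ∀ a b c d : Fin 3, c ≠ d → a ≠ c → a ≠ d → b ≠ c → b ≠ d → a = b := by decide
    exact fun i => key _ _ _ _ hjj (H.choose_spec i) (hj i) (H.choose_spec 0) (hj 0)
  rw [P.map_factor_δ_side_of_const α β H.choose_spec hconst,
    P.map_factor_δ_side_of_const α β hj hconst]

lemma val_const {p q : SimplexCategoryᵒᵖ} (α : p.unop ⟶ ⦋2⦌) :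
    P.val p q α (const q.unop ⦋1⦌ k) =
      (W.obj p).map (const q.unop ⦋0⦌ 0).op ((W.map α.op).app (op ⦋0⦌) P.base) := by
  by_cases H : ∃ j : Fin 3, ∀ i, α.toOrderHom i ≠ j
  · obtain ⟨j, hj⟩ := H
    rw [P.val_eq α _ j hj, const_fac_thru_zero, op_comp, Functor.map_comp_apply, P.side_at,
      NatTrans.naturality_apply, SimplicialObject.δ, ← NatTrans.comp_app_apply, ← W.map_comp,
      ← op_comp, factor_δ_spec α j hj]
  · rw [val, dif_neg H]

lemma val_comp_right {p q q' : SimplexCategoryᵒᵖ} (i : q ⟶ q') (α : p.unop ⟶ ⦋2⦌)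
    (β : q.unop ⟶ ⦋1⦌) :
    P.val p q' α (i.unop ≫ β) = (W.obj p).map i (P.val p q α β) := by
  by_cases H : ∃ j : Fin 3, ∀ i, α.toOrderHom i ≠ j
  · obtain ⟨j, hj⟩ := H
    rw [P.val_eq α _ j hj, P.val_eq α β j hj, op_comp, Functor.map_comp_apply]
    exact NatTrans.naturality_apply _ i _
  · rw [val, dif_neg H, val, dif_neg H, ← Functor.map_comp_apply]
    congr 2

lemma val_comp_left {p p' q : SimplexCategoryᵒᵖ} (f : p ⟶ p') (α : p.unop ⟶ ⦋2⦌)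
    (β : q.unop ⟶ ⦋1⦌)
    (hαβ : (∃ j : Fin 3, ∀ i, α.toOrderHom i ≠ j) ∨ β = const q.unop ⦋1⦌ k) :
    P.val p' q (f.unop ≫ α) β = (W.map f).app q (P.val p q α β) := by
  rcases hαβ with ⟨j, hj⟩ | rfl
  · rw [P.val_eq (f.unop ≫ α) β j fun i => hj _, P.val_eq α β j hj, ← NatTrans.comp_app_apply,
      ← W.map_comp]
    rfl
  · rw [P.val_const, P.val_const, op_comp, W.map_comp, NatTrans.comp_app_apply,
      NatTrans.naturality_apply]
    rfl

lemma _root_.bhSet.exists_ne_or_eq_const {p q : SimplexCategoryᵒᵖ} (x : (bhSet 2 1 k p).obj q) :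
    (∃ j : Fin 3, ∀ i, x.1.1.down.toOrderHom i ≠ j) ∨ x.1.2.down = const q.unop ⦋1⦌ k := by
  refine x.2.imp (fun hx => by simpa [Function.Surjective, SSet.stdSimplex.asOrderHom] using hx)
    fun hx => ?_
  refine SimplexCategory.Hom.ext _ _ (OrderHom.ext _ _ (funext fun i => ?_))
  by_contra hi
  have key : ∀ a b c : Fin 2, a ≠ b → c = b ∨ c = a := by decide
  refine hx (Set.eq_univ_of_forall fun v => ?_)
  rcases key _ _ v hi with rfl | rfl
  · exact Or.inr rfl
  · exact Or.inl ⟨i, rfl⟩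

noncomputable def toHom : bhObj 2 1 k ⟶ W where
  app p :=
    { app q := TypeCat.ofHom fun x => P.val p q x.1.1.down x.1.2.down
      naturality _ _ i := by
        ext x
        exact P.val_comp_right i _ _ }
  naturality _ _ f := by
    ext q x
    exact P.val_comp_left f _ _ (bhSet.exists_ne_or_eq_const x)

lemma factor_δ_δ_self (j : Fin 3) : factor_δ (m := 1) (n := 1) (δ j) j = 𝟙 _ := by
  rw [← cancel_mono (δ j), factor_δ_spec (δ j) j fun i => Fin.succAbove_ne j i, Category.id_comp]

lemma exists_lift (hW : ReedyFibrant W) :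
    ∃ τ : (W.obj (op ⦋2⦌)) _⦋1⦌, ∀ j : Fin 3, (W.δ j).app (op ⦋1⦌) τ = P.side j := by
  have sq : CommSq P.toHom (bhIncl 2 1 k) (terminal.from W) (terminal.from _) :=
    ⟨Subsingleton.elim _ _⟩
  have : HasLiftingProperty (bhIncl 2 1 k) (terminal.from W) := hW 2 0 k
  let top : (extProd Δ[2] Δ[1]).obj (op ⦋2⦌) _⦋1⦌ := (ULift.up (𝟙 _), ULift.up (𝟙 _))
  refine ⟨(sq.lift.app _).app _ top, fun j => ?_⟩
  have hj : ¬Function.Surjective (SSet.stdSimplex.asOrderHom (ULift.up (δ j) : Δ[2] _⦋1⦌)) :=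
    fun hs => (hs j).elim fun i => Fin.succAbove_ne j i
  calc (W.δ j).app (op ⦋1⦌) ((sq.lift.app _).app _ top)
      = (sq.lift.app _).app _
          (((bhIncl 2 1 k).app _).app _ ⟨(ULift.up (δ j), ULift.up (𝟙 _)), Or.inl hj⟩) :=
        (ConcreteCategory.congr_hom (NatTrans.congr_app (sq.lift.naturality (δ j).op) _) top).symm
    _ = P.val (op ⦋1⦌) (op ⦋1⦌) (δ j) (𝟙 _) :=
        ConcreteCategory.congr_hom (NatTrans.congr_app (NatTrans.congr_app sq.fac_left _) _) _
    _ = P.side j := by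
        rw [P.val_eq (δ j) _ j fun i => Fin.succAbove_ne j i, factor_δ_δ_self]
        simp

end PrismHorn

lemma SSet.map_const_σ_zero (X : SSet.{0}) (w : Fin 2) (a : X _⦋0⦌) :
    X.map (SimplexCategory.const ⦋0⦌ ⦋1⦌ w).op (X.σ 0 a) = a := by
  rw [SimplicialObject.σ, ← Functor.map_comp_apply, ← op_comp,
    eq_const_to_zero (SimplexCategory.const ⦋0⦌ ⦋1⦌ w ≫ σ 0), const_eq_id, op_id,
    Functor.map_id_apply]

namespace SegalSpace

variable (S : SegalSpace)

/-- A `1`-simplex of the mapping space `map_W(x,y)`. -/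
def IsElemHtpy (x y : S.Ob) (e : (S.W.obj (op ⦋1⦌)) _⦋1⦌) : Prop :=
  (S.W.δ 1).app (op ⦋1⦌) e = (S.W.obj (op ⦋0⦌)).σ 0 x ∧
    (S.W.δ 0).app (op ⦋1⦌) e = (S.W.obj (op ⦋0⦌)).σ 0 y

/-- `f` and `f'` are the vertices `k` and `k + 1` of a `1`-simplex of `map_W(src f, tgt f)`. -/
def ElemHtpy (k : Fin 2) (f f' : (S.W.obj (op ⦋1⦌)) _⦋0⦌) : Prop :=
  ∃ e, S.IsElemHtpy (S.src f) (S.tgt f) e ∧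
    (S.W.obj (op ⦋1⦌)).map (const ⦋0⦌ ⦋1⦌ k).op e = f ∧
    (S.W.obj (op ⦋1⦌)).map (const ⦋0⦌ ⦋1⦌ (k + 1)).op e = f'

variable {S}

lemma IsElemHtpy.src_map_const {x y : S.Ob} {e : (S.W.obj (op ⦋1⦌)) _⦋1⦌}
    (he : S.IsElemHtpy x y e) (k : Fin 2) :
    S.src ((S.W.obj (op ⦋1⦌)).map (const ⦋0⦌ ⦋1⦌ k).op e) = x := by
  rw [src, SimplicialObject.δ, NatTrans.naturality_apply]
  exact (congrArg _ he.1).trans (SSet.map_const_σ_zero _ k x)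

lemma IsElemHtpy.tgt_map_const {x y : S.Ob} {e : (S.W.obj (op ⦋1⦌)) _⦋1⦌}
    (he : S.IsElemHtpy x y e) (k : Fin 2) :
    S.tgt ((S.W.obj (op ⦋1⦌)).map (const ⦋0⦌ ⦋1⦌ k).op e) = y := by
  rw [tgt, SimplicialObject.δ, NatTrans.naturality_apply]
  exact (congrArg _ he.2).trans (SSet.map_const_σ_zero _ k y)

lemma elemHtpy_of_isElemHtpy {x y : S.Ob} {e : (S.W.obj (op ⦋1⦌)) _⦋1⦌}
    (he : S.IsElemHtpy x y e) (k : Fin 2) :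
    S.ElemHtpy k ((S.W.obj (op ⦋1⦌)).map (const ⦋0⦌ ⦋1⦌ k).op e)
      ((S.W.obj (op ⦋1⦌)).map (const ⦋0⦌ ⦋1⦌ (k + 1)).op e) :=
  ⟨e, by rwa [he.src_map_const, he.tgt_map_const], rfl, rfl⟩

lemma isElemHtpy_σ (f : (S.W.obj (op ⦋1⦌)) _⦋0⦌) :
    S.IsElemHtpy (S.src f) (S.tgt f) ((S.W.obj (op ⦋1⦌)).σ 0 f) :=
  ⟨NatTrans.naturality_apply (S.W.δ 1) (σ 0).op f, NatTrans.naturality_apply (S.W.δ 0) (σ 0).op f⟩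

lemma elemHtpy_refl (k : Fin 2) (f : (S.W.obj (op ⦋1⦌)) _⦋0⦌) : S.ElemHtpy k f f :=
  ⟨_, isElemHtpy_σ f, SSet.map_const_σ_zero _ k f, SSet.map_const_σ_zero _ (k + 1) f⟩

lemma src_δ_app (σ : (S.W.obj (op ⦋2⦌)) _⦋0⦌) (j : Fin 3) :
    S.src ((S.W.δ j).app (op ⦋0⦌) σ) =
      (S.W.map (const ⦋0⦌ ⦋2⦌ ((δ j).toOrderHom 0)).op).app (op ⦋0⦌) σ := by
  rw [src, SimplicialObject.δ, SimplicialObject.δ, ← NatTrans.comp_app_apply, ← S.W.map_comp,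
    ← op_comp, δ_one_eq_const, const_comp]

lemma tgt_δ_app (σ : (S.W.obj (op ⦋2⦌)) _⦋0⦌) (j : Fin 3) :
    S.tgt ((S.W.δ j).app (op ⦋0⦌) σ) =
      (S.W.map (const ⦋0⦌ ⦋2⦌ ((δ j).toOrderHom 1)).op).app (op ⦋0⦌) σ := by
  rw [tgt, SimplicialObject.δ, SimplicialObject.δ, ← NatTrans.comp_app_apply, ← S.W.map_comp,
    ← op_comp, δ_zero_eq_const, const_comp]

lemma exists_δ_app_eq_of_isElemHtpy (k : Fin 2) (σ : (S.W.obj (op ⦋2⦌)) _⦋0⦌)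
    (e : Fin 3 → (S.W.obj (op ⦋1⦌)) _⦋1⦌)
    (he : ∀ j, S.IsElemHtpy (S.src ((S.W.δ j).app (op ⦋0⦌) σ))
      (S.tgt ((S.W.δ j).app (op ⦋0⦌) σ)) (e j))
    (hk : ∀ j, (S.W.obj (op ⦋1⦌)).map (const ⦋0⦌ ⦋1⦌ k).op (e j) = (S.W.δ j).app (op ⦋0⦌) σ) :
    ∃ σ' : (S.W.obj (op ⦋2⦌)) _⦋0⦌, ∀ j,
      (S.W.δ j).app (op ⦋0⦌) σ' = (S.W.obj (op ⦋1⦌)).map (const ⦋0⦌ ⦋1⦌ (k + 1)).op (e j) := by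
  let P : PrismHorn S.W k :=
    { base := σ
      side := e
      edge := fun i => (S.W.obj (op ⦋0⦌)).σ 0 ((S.W.map (const ⦋0⦌ ⦋2⦌ i).op).app (op ⦋0⦌) σ)
      side_vertex := fun j => Fin.forall_fin_two.2
        ⟨by rw [← src_δ_app, ← (he j).1, SimplicialObject.δ, δ_one_eq_const],
          by rw [← tgt_δ_app, ← (he j).2, SimplicialObject.δ, δ_zero_eq_const]⟩
      side_at := hk }
  obtain ⟨τ, hτ⟩ := P.exists_lift S.reedy
  refine ⟨(S.W.obj (op ⦋2⦌)).map (const ⦋0⦌ ⦋1⦌ (k + 1)).op τ, fun j => ?_⟩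
  rw [SimplicialObject.δ, NatTrans.naturality_apply]
  exact congrArg _ (hτ j)

theorem IsComp.of_elemHtpy {k : Fin 2} {f g c f' g' c' : (S.W.obj (op ⦋1⦌)) _⦋0⦌}
    (hc : S.IsComp f g c) (hf : S.ElemHtpy k f f') (hg : S.ElemHtpy k g g')
    (hc' : S.ElemHtpy k c c') : S.IsComp f' g' c' := by
  obtain ⟨σ, rfl, rfl, rfl⟩ := hc
  obtain ⟨ef, hef, hef_k, rfl⟩ := hf
  obtain ⟨eg, heg, heg_k, rfl⟩ := hg
  obtain ⟨ec, hec, hec_k, rfl⟩ := hc'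
  obtain ⟨σ', hσ'⟩ := S.exists_δ_app_eq_of_isElemHtpy k σ ![eg, ec, ef]
    (Fin.forall_fin_succ.2 ⟨heg, Fin.forall_fin_two.2 ⟨hec, hef⟩⟩)
    (Fin.forall_fin_succ.2 ⟨heg_k, Fin.forall_fin_two.2 ⟨hec_k, hef_k⟩⟩)
  exact ⟨σ', hσ' 2, hσ' 0, hσ' 1⟩

theorem HoEquiv.of_elemHtpy {k : Fin 2} {x y : S.Ob} {g g' : (S.W.obj (op ⦋1⦌)) _⦋0⦌}
    (hg : S.HoEquiv x y g) (hgg' : S.ElemHtpy k g g') : S.HoEquiv x y g' := by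
  obtain ⟨⟨f, hfs, hft, c, hc, hcid⟩, ⟨h, hhs, hht, d, hd, hdid⟩⟩ := hg
  exact ⟨⟨f, hfs, hft, c, hc.of_elemHtpy (elemHtpy_refl k f) hgg' (elemHtpy_refl k c), hcid⟩,
    ⟨h, hhs, hht, d, hd.of_elemHtpy hgg' (elemHtpy_refl k h) (elemHtpy_refl k d), hdid⟩⟩

end SegalSpace

theorem SegalSpace.hoEquiv_of_homotopic_general (S : SegalSpace) (x y : S.Ob)
    (g g' : (S.W.obj (op ⦋1⦌)) _⦋0⦌)
    (he : S.HoEquiv x y g) (hh : S.Htpy x y g g') :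
    S.HoEquiv x y g' := by
  suffices ∀ a b, S.Htpy x y a b → (S.HoEquiv x y a ↔ S.HoEquiv x y b) from (this g g' hh).1 he
  intro a b hab
  induction hab with
  | rel a b hab =>
    obtain ⟨e, rfl, rfl, he⟩ := hab
    rw [SimplicialObject.δ, SimplicialObject.δ, δ_one_eq_const, δ_zero_eq_const]
    exact ⟨(·.of_elemHtpy (elemHtpy_of_isElemHtpy he 0)),
      (·.of_elemHtpy (elemHtpy_of_isElemHtpy he 1))⟩
  | refl => exact Iff.rfl
  | symm _ _ _ ih => exact ih.symm
  | trans _ _ _ _ _ ih₁ ih₂ => exact ih₁.trans ih₂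

/-- In a Segal space, any `0`-simplex of `map_W(x,y)` lying in the same path
component as a homotopy equivalence is itself a homotopy equivalence. -/
theorem SegalSpace.hoEquiv_of_homotopic (S : SegalSpace) (x y : S.Ob)
    (g g' : (S.W.obj (op ⦋1⦌)) _⦋0⦌)
    (hgs : S.src g = x) (hgt : S.tgt g = y)
    (hgs' : S.src g' = x) (hgt' : S.tgt g' = y)
    (he : S.HoEquiv x y g) (hh : S.Htpy x y g g') :
    S.HoEquiv x y g' :=
  SegalSpace.hoEquiv_of_homotopic_general S x y g g' he hh
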